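/- Let α ∈ ℝ, ρ < 0 and A ∈ 𝒜^∞_ρ. If F ∈ 2RV^∞_{α,ρ}(A), then for every θ ≠ 0 the function t ↦ |F(t)|^θ belongs to 2RV^∞_{θα,ρ}(θ·A). -/
import Mathlib


open Filter MeasureTheory Set Asymptotics

noncomputable section

/-- `F` has constant sign near infinity. -/
def EvSign (F : ℝ → ℝ) : Prop :=
  (∀ᶠ t in atTop, 0 < F t) ∨ (∀ᶠ t in atTop, F t < 0)

/-- `F` is regularly varying at infinity with index `α`. -/
def RVInf (α : ℝ) (F : ℝ → ℝ) : Prop :=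
  Measurable F ∧ EvSign F ∧
    ∀ x : ℝ, 0 < x → Tendsto (fun t => F (t * x) / F t) atTop (nhds (x ^ α))

/-- `F` is second-order regularly varying at infinity with first-order parameter `α`,
second-order parameter `ρ` and auxiliary function `A`. -/
def SORVInf (α ρ : ℝ) (A F : ℝ → ℝ) : Prop :=
  RVInf α F ∧ EvSign A ∧
    ∀ x : ℝ, 0 < x →
      Tendsto (fun t => (F (t * x) / F t - x ^ α) / A t) atTop
        (nhds (x ^ α * ∫ u in (1:ℝ)..x, u ^ (ρ - 1)))

/-- The class `𝒜^∞_ρ` of regularly varying auxiliary functions tending to `0`. -/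
def AuxA (ρ : ℝ) (A : ℝ → ℝ) : Prop :=
  RVInf ρ A ∧ Tendsto A atTop (nhds 0)

/-- `F` is positive and locally bounded on `[0,∞)`. -/
def PosLocBdd (F : ℝ → ℝ) : Prop :=
  (∀ t : ℝ, 0 ≤ t → 0 < F t) ∧
    ∀ r : ℝ, ∃ C : ℝ, ∀ t ∈ Icc (0:ℝ) r, |F t| ≤ C

lemma phi_tendsto (a θ : ℝ) (ha : 0 < a) :
    Tendsto (fun y : ℝ => if y = a then θ * a ^ (θ - 1) else (y ^ θ - a ^ θ) / (y - a))
      (nhds a) (nhds (θ * a ^ (θ - 1))) := by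
  have hd : HasDerivAt (fun y : ℝ => y ^ θ) (θ * a ^ (θ - 1)) a :=
    Real.hasDerivAt_rpow_const (Or.inl ha.ne')
  have hs := hasDerivAt_iff_tendsto_slope.mp hd
  rw [← nhdsNE_sup_pure a, tendsto_sup]
  constructor
  · refine hs.congr' ?_
    filter_upwards [self_mem_nhdsWithin] with y hy
    simp only [mem_compl_iff, mem_singleton_iff] at hy
    rw [slope_def_field, if_neg hy]
  · simp only [tendsto_pure_left, if_pos rfl]
    intro s hs'
    exact mem_of_mem_nhds hs'

/-- powers of second-order regularly varying functions. -/
theorem statement_8 (α ρ : ℝ) (hρ : ρ < 0) (A F : ℝ → ℝ)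
    (hA : AuxA ρ A) (hF : PosLocBdd F) (h2 : SORVInf α ρ A F)
    (θ : ℝ) (hθ : θ ≠ 0) :
    SORVInf (θ * α) ρ (fun t => θ * A t) (fun t => |F t| ^ θ) := by
  obtain ⟨⟨hFmeas, hFsign, hFrv⟩, hAsign, h2nd⟩ := h2
  obtain ⟨hFpos, -⟩ := hF
  have hEv : ∀ᶠ t : ℝ in atTop, (0:ℝ) ≤ t := eventually_ge_atTop 0
  -- key: eventual equality of ratios
  have hratio : ∀ x : ℝ, 0 < x → ∀ᶠ t : ℝ in atTop,
      |F (t * x)| ^ θ / |F t| ^ θ = (F (t * x) / F t) ^ θ := by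
    intro x hx
    filter_upwards [hEv] with t ht
    have h1 : 0 < F t := hFpos t ht
    have h2 : 0 < F (t * x) := hFpos _ (mul_nonneg ht hx.le)
    rw [abs_of_pos h1, abs_of_pos h2, Real.div_rpow h2.le h1.le]
  have hmeas : Measurable (fun t => |F t| ^ θ) := by
    have hg : Measurable (fun y : ℝ => if y = 0 then (0:ℝ) ^ θ else Real.exp (Real.log y * θ)) := by
      refine Measurable.ite ?_ measurable_const
        (Real.measurable_exp.comp (Real.measurable_log.mul measurable_const))
      simpa using measurableSet_singleton (0:ℝ)
    have heq : (fun t => |F t| ^ θ)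
        = (fun y : ℝ => if y = 0 then (0:ℝ) ^ θ else Real.exp (Real.log y * θ)) ∘
          (fun t => |F t|) := by
      funext t
      by_cases h : |F t| = 0
      · simp [Function.comp, h]
      · have hpos : 0 < |F t| := lt_of_le_of_ne (abs_nonneg _) (Ne.symm h)
        simp only [Function.comp, if_neg h]
        rw [Real.rpow_def_of_pos hpos]
    rw [heq]
    exact hg.comp hFmeas.abs
  refine ⟨⟨hmeas, ?_, ?_⟩, ?_, ?_⟩
  · left
    filter_upwards [hEv] with t ht
    exact Real.rpow_pos_of_pos (abs_pos.mpr (hFpos t ht).ne') θ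
  · intro x hx
    have ha : (0:ℝ) < x ^ α := Real.rpow_pos_of_pos hx α
    have hc : Tendsto (fun y : ℝ => y ^ θ) (nhds (x ^ α)) (nhds ((x ^ α) ^ θ)) :=
      (Real.continuousAt_rpow_const _ _ (Or.inl ha.ne')).tendsto
    have heq : (x ^ α) ^ θ = x ^ (θ * α) := by
      rw [← Real.rpow_mul hx.le, mul_comm]
    rw [← heq]
    exact (hc.comp (hFrv x hx)).congr' ((hratio x hx).mono fun t ht => ht.symm)
  · rcases hAsign with h | h
    · rcases lt_or_gt_of_ne hθ with hθ' | hθ'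
      · right; filter_upwards [h] with t ht; exact mul_neg_of_neg_of_pos hθ' ht
      · left; filter_upwards [h] with t ht; exact mul_pos hθ' ht
    · rcases lt_or_gt_of_ne hθ with hθ' | hθ'
      · left; filter_upwards [h] with t ht; exact mul_pos_of_neg_of_neg hθ' ht
      · right; filter_upwards [h] with t ht; exact mul_neg_of_pos_of_neg hθ' ht
  · intro x hx
    set a : ℝ := x ^ α with ha_def
    have ha : (0:ℝ) < a := Real.rpow_pos_of_pos hx α
    set I : ℝ := ∫ u in (1:ℝ)..x, u ^ (ρ - 1) with hI_def
    set φ : ℝ → ℝ := fun y => if y = a then θ * a ^ (θ - 1) else (y ^ θ - a ^ θ) / (y - a)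
      with hφ_def
    have hφ : Tendsto φ (nhds a) (nhds (θ * a ^ (θ - 1))) := phi_tendsto a θ ha
    have hR : Tendsto (fun t => F (t * x) / F t) atTop (nhds a) := hFrv x hx
    have hlim : Tendsto
        (fun t => φ (F (t * x) / F t) * ((F (t * x) / F t - a) / A t) / θ)
        atTop (nhds (θ * a ^ (θ - 1) * (a * I) / θ)) :=
      (((hφ.comp hR).mul (h2nd x hx))).div_const θ
    have hval : θ * a ^ (θ - 1) * (a * I) / θ = x ^ (θ * α) * I := by
      have h1 : a ^ (θ - 1) * a = a ^ θ := by
        rw [Real.rpow_sub_one ha.ne', div_mul_cancel₀ _ ha.ne']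
      have h2 : a ^ θ = x ^ (θ * α) := by
        rw [ha_def, ← Real.rpow_mul hx.le, mul_comm]
      field_simp
      rw [← h2, ← h1]
      ring
    rw [← hval]
    refine hlim.congr' ?_
    filter_upwards [hratio x hx] with t ht
    set R := F (t * x) / F t with hR_def
    have key : R ^ θ - a ^ θ = φ R * (R - a) := by
      by_cases hRa : R = a
      · simp [hφ_def, hRa]
      · rw [hφ_def]
        simp only [if_neg hRa]
        rw [div_mul_cancel₀]
        exact sub_ne_zero.mpr hRa
    have h2' : x ^ (θ * α) = a ^ θ := by
      rw [ha_def, ← Real.rpow_mul hx.le, mul_comm]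
    rw [ht, h2', key]
    simp only [div_eq_mul_inv, mul_inv]
    ring
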